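/- For every a > 0 and μ ∈ ℝ, the inverse Gaussian density has total mass ∫₀^∞ (a/√(2π t³)) · exp( −(a − μ t)²/(2t) ) dt = exp( (μ − |μ|) a ). In particular the integral equals 1 when μ ≥ 0 and equals e^{2μa} when μ < 0. -/

import Mathlib

open MeasureTheory Real Filter Set Topology intervalIntegral

noncomputable def Ngauss (x : ℝ) : ℝ := ∫ s in (0:ℝ)..x, Real.exp (-s^2/2)

lemma gauss_integrable : MeasureTheory.Integrable (fun s : ℝ => Real.exp (-s^2/2)) := by
  have : (fun s : ℝ => Real.exp (-s^2/2)) = fun s : ℝ => Real.exp (-(1/2) * s^2) := by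
    ext s; ring_nf
  rw [this]
  exact integrable_exp_neg_mul_sq (by norm_num)

lemma Ngauss_hasDerivAt (x : ℝ) : HasDerivAt Ngauss (Real.exp (-x^2/2)) x := by
  refine intervalIntegral.integral_hasDerivAt_right gauss_integrable.intervalIntegrable
    ?_ ?_
  · exact (Real.continuous_exp.comp (by continuity)).stronglyMeasurableAtFilter _ _
  · exact (Real.continuous_exp.comp (by continuity)).continuousAt

lemma gauss_Ioi : (∫ s in Set.Ioi (0:ℝ), Real.exp (-s^2/2)) = Real.sqrt (2*Real.pi)/2 := by
  have : (fun s : ℝ => Real.exp (-s^2/2)) = fun s : ℝ => Real.exp (-(1/2) * s^2) := by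
    ext s; ring_nf
  rw [this, integral_gaussian_Ioi, show Real.pi / (1/2) = 2 * Real.pi by ring]

lemma Ngauss_top : Tendsto Ngauss atTop (𝓝 (Real.sqrt (2*Real.pi)/2)) := by
  have h := MeasureTheory.intervalIntegral_tendsto_integral_Ioi 0
    (gauss_integrable.integrableOn) tendsto_id
  rw [gauss_Ioi] at h
  exact h

lemma gauss_Iic : (∫ s in Set.Iic (0:ℝ), Real.exp (-s^2/2)) = Real.sqrt (2*Real.pi)/2 := by
  have h := integral_comp_neg_Iic (0:ℝ) (fun s => Real.exp (-s^2/2))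
  simp only [neg_sq, neg_zero] at h
  rw [show (∫ s in Set.Iic (0:ℝ), Real.exp (-s^2/2))
      = ∫ s in Set.Iic (0:ℝ), Real.exp (-(-s)^2/2) by simp] at *
  rw [show (∫ s in Set.Iic (0:ℝ), Real.exp (-(-s)^2/2))
      = ∫ s in Set.Ioi (0:ℝ), Real.exp (-s^2/2) from h]
  exact gauss_Ioi

lemma Ngauss_bot : Tendsto Ngauss atBot (𝓝 (-(Real.sqrt (2*Real.pi)/2))) := by
  have h := MeasureTheory.intervalIntegral_tendsto_integral_Iic 0
    (gauss_integrable.integrableOn) tendsto_id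
  rw [gauss_Iic] at h
  have h2 := h.neg
  refine h2.congr (fun x => ?_)
  rw [← intervalIntegral.integral_symm]
  rfl

lemma Ngauss_zero : Ngauss 0 = 0 := by simp [Ngauss]

lemma sqrt_tendsto_atTop : Tendsto Real.sqrt atTop atTop := by
  refine tendsto_atTop_atTop.2 fun b => ⟨(max b 0)^2, fun x hx => ?_⟩
  calc b ≤ max b 0 := le_max_left _ _
    _ = Real.sqrt ((max b 0)^2) := (Real.sqrt_sq (le_max_right _ _)).symm
    _ ≤ Real.sqrt x := Real.sqrt_le_sqrt hx

lemma sqrt_tendsto_zero_right : Tendsto Real.sqrt (𝓝[>] (0:ℝ)) (𝓝[>] (0:ℝ)) := by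
  apply tendsto_nhdsWithin_of_tendsto_nhds_of_eventually_within
  · exact (Real.continuous_sqrt.tendsto' 0 0 Real.sqrt_zero).mono_left nhdsWithin_le_nhds
  · filter_upwards [self_mem_nhdsWithin] with t ht
    exact Real.sqrt_pos.2 ht

lemma inverse_gaussian_key (a c : ℝ) (ha : 0 < a) (hc : 0 ≤ c) :
    (∫ t in Set.Ioi (0:ℝ),
      a / Real.sqrt (2 * Real.pi * t ^ 3) * Real.exp (-(a - c * t) ^ 2 / (2 * t))) = 1 := by
  have hsqpos : 0 < Real.sqrt (2*Real.pi) := Real.sqrt_pos.2 (by positivity)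
  set E : ℝ := Real.exp (2*a*c) with hE
  set G : ℝ → ℝ := fun t => if t ≤ 0 then 0 else
    (Ngauss ((c*t - a)/Real.sqrt t) + E * Ngauss (-((a + c*t)/Real.sqrt t))
      + (1+E) * (Real.sqrt (2*Real.pi)/2)) / Real.sqrt (2*Real.pi) with hG
  have hG0 : G 0 = 0 := by simp [hG]
  -- continuity at 0 from the right
  have hcont : ContinuousWithinAt G (Set.Ici (0:ℝ)) 0 := by
    rw [← continuousWithinAt_Ioi_iff_Ici]
    have hinv : Tendsto (fun t : ℝ => (Real.sqrt t)⁻¹) (𝓝[>] 0) atTop :=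
      tendsto_inv_nhdsGT_zero.comp sqrt_tendsto_zero_right
    have h1 : Tendsto (fun t : ℝ => (c*t - a)/Real.sqrt t) (𝓝[>] 0) atBot := by
      have hnum : Tendsto (fun t : ℝ => c*t - a) (𝓝[>] 0) (𝓝 (-a)) := by
        have : Tendsto (fun t : ℝ => c*t - a) (𝓝 0) (𝓝 (c*0 - a)) := by
          exact (continuous_const.mul continuous_id).sub continuous_const |>.tendsto 0
        simpa using this.mono_left nhdsWithin_le_nhds
      simpa [div_eq_mul_inv] using hnum.neg_mul_atTop (by linarith) hinv
    have h2 : Tendsto (fun t : ℝ => -((a + c*t)/Real.sqrt t)) (𝓝[>] 0) atBot := by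
      have hnum : Tendsto (fun t : ℝ => -(a + c*t)) (𝓝[>] 0) (𝓝 (-a)) := by
        have : Tendsto (fun t : ℝ => -(a + c*t)) (𝓝 0) (𝓝 (-(a + c*0))) := by
          exact ((continuous_const.add (continuous_const.mul continuous_id)).neg).tendsto 0
        simpa using this.mono_left nhdsWithin_le_nhds
      have := hnum.neg_mul_atTop (by linarith) hinv
      refine this.congr (fun t => ?_)
      rw [div_eq_mul_inv, neg_mul]
    have hlim : Tendsto G (𝓝[>] 0)
        (𝓝 ((-(Real.sqrt (2*Real.pi)/2) + E * (-(Real.sqrt (2*Real.pi)/2))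
          + (1+E) * (Real.sqrt (2*Real.pi)/2)) / Real.sqrt (2*Real.pi))) := by
      have : Tendsto (fun t : ℝ =>
          (Ngauss ((c*t - a)/Real.sqrt t) + E * Ngauss (-((a + c*t)/Real.sqrt t))
            + (1+E) * (Real.sqrt (2*Real.pi)/2)) / Real.sqrt (2*Real.pi)) (𝓝[>] 0)
          (𝓝 ((-(Real.sqrt (2*Real.pi)/2) + E * (-(Real.sqrt (2*Real.pi)/2))
            + (1+E) * (Real.sqrt (2*Real.pi)/2)) / Real.sqrt (2*Real.pi))) := by
        exact (((Ngauss_bot.comp h1).add ((Ngauss_bot.comp h2).const_mul E)).add_const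
          ((1+E) * (Real.sqrt (2*Real.pi)/2))).div_const _
      refine this.congr' ?_
      filter_upwards [self_mem_nhdsWithin] with t ht
      simp [hG, not_le.2 (show (0:ℝ) < t from ht)]
    have : (-(Real.sqrt (2*Real.pi)/2) + E * (-(Real.sqrt (2*Real.pi)/2))
        + (1+E) * (Real.sqrt (2*Real.pi)/2)) / Real.sqrt (2*Real.pi) = 0 := by
      rw [show (-(Real.sqrt (2*Real.pi)/2) + E * (-(Real.sqrt (2*Real.pi)/2))
        + (1+E) * (Real.sqrt (2*Real.pi)/2)) = 0 by ring, zero_div]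
    rw [this] at hlim
    rw [ContinuousWithinAt, hG0]
    exact hlim
  -- derivative of G on Ioi 0
  have hderiv : ∀ t ∈ Set.Ioi (0:ℝ), HasDerivAt G
      (a / Real.sqrt (2 * Real.pi * t ^ 3) * Real.exp (-(a - c * t) ^ 2 / (2 * t))) t := by
    intro t ht
    have ht0 : (0:ℝ) < t := ht
    have hst : 0 < Real.sqrt t := Real.sqrt_pos.2 ht0
    have hts : Real.sqrt t ^ 2 = t := Real.sq_sqrt ht0.le
    have hden : HasDerivAt Real.sqrt (1/(2*Real.sqrt t)) t := Real.hasDerivAt_sqrt ht0.ne'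
    have hw1 : HasDerivAt (fun s : ℝ => (c*s - a)/Real.sqrt s)
        ((c * Real.sqrt t - (c*t - a) * (1/(2*Real.sqrt t))) / Real.sqrt t ^ 2) t := by
      have hnum : HasDerivAt (fun s : ℝ => c*s - a) c t := by
        simpa using ((hasDerivAt_id t).const_mul c).sub_const a
      exact hnum.div hden hst.ne'
    have hw2 : HasDerivAt (fun s : ℝ => -((a + c*s)/Real.sqrt s))
        (-((c * Real.sqrt t - (a + c*t) * (1/(2*Real.sqrt t))) / Real.sqrt t ^ 2)) t := by
      have hnum : HasDerivAt (fun s : ℝ => a + c*s) c t := by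
        simpa using ((hasDerivAt_id t).const_mul c).const_add a
      exact (hnum.div hden hst.ne').neg
    have hN1 : HasDerivAt (fun s : ℝ => Ngauss ((c*s - a)/Real.sqrt s))
        (Real.exp (-((c*t - a)/Real.sqrt t)^2/2) *
          ((c * Real.sqrt t - (c*t - a) * (1/(2*Real.sqrt t))) / Real.sqrt t ^ 2)) t :=
      by have := (Ngauss_hasDerivAt ((c*t - a)/Real.sqrt t)).comp t hw1; exact this
    have hN2 : HasDerivAt (fun s : ℝ => Ngauss (-((a + c*s)/Real.sqrt s)))
        (Real.exp (-(-((a + c*t)/Real.sqrt t))^2/2) *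
          (-((c * Real.sqrt t - (a + c*t) * (1/(2*Real.sqrt t))) / Real.sqrt t ^ 2))) t :=
      by have := (Ngauss_hasDerivAt (-((a + c*t)/Real.sqrt t))).comp t hw2; exact this
    have hF : HasDerivAt (fun s : ℝ =>
        (Ngauss ((c*s - a)/Real.sqrt s) + E * Ngauss (-((a + c*s)/Real.sqrt s))
          + (1+E) * (Real.sqrt (2*Real.pi)/2)) / Real.sqrt (2*Real.pi))
        ((Real.exp (-((c*t - a)/Real.sqrt t)^2/2) *
          ((c * Real.sqrt t - (c*t - a) * (1/(2*Real.sqrt t))) / Real.sqrt t ^ 2)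
          + E * (Real.exp (-(-((a + c*t)/Real.sqrt t))^2/2) *
          (-((c * Real.sqrt t - (a + c*t) * (1/(2*Real.sqrt t))) / Real.sqrt t ^ 2))))
          / Real.sqrt (2*Real.pi)) t :=
      ((hN1.add (hN2.const_mul E)).add_const _).div_const _
    have hGF : G =ᶠ[nhds t] (fun s : ℝ =>
        (Ngauss ((c*s - a)/Real.sqrt s) + E * Ngauss (-((a + c*s)/Real.sqrt s))
          + (1+E) * (Real.sqrt (2*Real.pi)/2)) / Real.sqrt (2*Real.pi)) := by
      filter_upwards [isOpen_Ioi.mem_nhds ht] with s hs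
      simp [hG, not_le.2 (show (0:ℝ) < s from hs)]
    have hG' := hF.congr_of_eventuallyEq hGF
    -- now identify the derivative value
    have hA : Real.exp (-((c*t - a)/Real.sqrt t)^2/2) = Real.exp (-(a - c*t)^2/(2*t)) := by
      congr 1
      rw [div_pow, hts]
      field_simp
      ring
    have hB : E * Real.exp (-(-((a + c*t)/Real.sqrt t))^2/2)
        = Real.exp (-(a - c*t)^2/(2*t)) := by
      rw [hE, ← Real.exp_add]
      congr 1
      rw [neg_sq, div_pow, hts]
      field_simp
      ring
    have hdsum : (c * Real.sqrt t - (c*t - a) * (1/(2*Real.sqrt t))) / Real.sqrt t ^ 2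
        + (-((c * Real.sqrt t - (a + c*t) * (1/(2*Real.sqrt t))) / Real.sqrt t ^ 2))
        = a / (t * Real.sqrt t) := by
      rw [← hts]
      rw [Real.sqrt_sq hst.le]
      field_simp
      ring
    have hsqrt3 : Real.sqrt (2*Real.pi*t^3) = Real.sqrt (2*Real.pi) * (t * Real.sqrt t) := by
      rw [Real.sqrt_mul (by positivity : (0:ℝ) ≤ 2*Real.pi), show t^3 = t^2 * t by ring,
        Real.sqrt_mul (sq_nonneg t), Real.sqrt_sq ht0.le]
    have hval : (Real.exp (-((c*t - a)/Real.sqrt t)^2/2) *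
          ((c * Real.sqrt t - (c*t - a) * (1/(2*Real.sqrt t))) / Real.sqrt t ^ 2)
          + E * (Real.exp (-(-((a + c*t)/Real.sqrt t))^2/2) *
          (-((c * Real.sqrt t - (a + c*t) * (1/(2*Real.sqrt t))) / Real.sqrt t ^ 2))))
          / Real.sqrt (2*Real.pi)
        = a / Real.sqrt (2 * Real.pi * t ^ 3) * Real.exp (-(a - c*t)^2/(2*t)) := by
      rw [show E * (Real.exp (-(-((a + c*t)/Real.sqrt t))^2/2) *
          (-((c * Real.sqrt t - (a + c*t) * (1/(2*Real.sqrt t))) / Real.sqrt t ^ 2)))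
        = (E * Real.exp (-(-((a + c*t)/Real.sqrt t))^2/2)) *
          (-((c * Real.sqrt t - (a + c*t) * (1/(2*Real.sqrt t))) / Real.sqrt t ^ 2)) by ring,
        hA, hB, hsqrt3]
      rw [show Real.exp (-(a - c*t)^2/(2*t)) *
          ((c * Real.sqrt t - (c*t - a) * (1/(2*Real.sqrt t))) / Real.sqrt t ^ 2)
          + Real.exp (-(a - c*t)^2/(2*t)) *
          (-((c * Real.sqrt t - (a + c*t) * (1/(2*Real.sqrt t))) / Real.sqrt t ^ 2))
        = Real.exp (-(a - c*t)^2/(2*t)) *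
          ((c * Real.sqrt t - (c*t - a) * (1/(2*Real.sqrt t))) / Real.sqrt t ^ 2
            + (-((c * Real.sqrt t - (a + c*t) * (1/(2*Real.sqrt t))) / Real.sqrt t ^ 2))) by ring,
        hdsum]
      rw [div_mul_eq_div_div_swap]
      ring
    rw [hval] at hG'
    exact hG'
  -- nonnegativity of the integrand
  have hpos : ∀ t ∈ Set.Ioi (0:ℝ),
      0 ≤ a / Real.sqrt (2 * Real.pi * t ^ 3) * Real.exp (-(a - c * t) ^ 2 / (2 * t)) := by
    intro t _
    positivity
  -- limit of G at infinity
  have htop : Tendsto G atTop (𝓝 1) := by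
    have hsqrtTop : Tendsto (fun t : ℝ => Real.sqrt t) atTop atTop := sqrt_tendsto_atTop
    have hinv : Tendsto (fun t : ℝ => (Real.sqrt t)⁻¹) atTop (𝓝 0) :=
      tendsto_inv_atTop_zero.comp hsqrtTop
    rcases eq_or_lt_of_le hc with hc0 | hcpos
    · -- c = 0
      have hE1 : E = 1 := by rw [hE, ← hc0]; simp
      have h1 : Tendsto (fun t : ℝ => (c*t - a)/Real.sqrt t) atTop (𝓝 0) := by
        have h := hinv.const_mul (-a)
        rw [mul_zero] at h
        refine h.congr (fun t => ?_)
        rw [← hc0, zero_mul, zero_sub, div_eq_mul_inv, neg_mul]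
      have h2 : Tendsto (fun t : ℝ => -((a + c*t)/Real.sqrt t)) atTop (𝓝 0) := by
        have h := (hinv.const_mul a).neg
        rw [mul_zero, neg_zero] at h
        refine h.congr (fun t => ?_)
        rw [← hc0, zero_mul, add_zero, div_eq_mul_inv]
      have hNc : Tendsto Ngauss (𝓝 0) (𝓝 (Ngauss 0)) :=
        (Ngauss_hasDerivAt 0).continuousAt.tendsto
      have hlim : Tendsto (fun t : ℝ =>
          (Ngauss ((c*t - a)/Real.sqrt t) + E * Ngauss (-((a + c*t)/Real.sqrt t))
            + (1+E) * (Real.sqrt (2*Real.pi)/2)) / Real.sqrt (2*Real.pi)) atTop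
          (𝓝 ((Ngauss 0 + E * Ngauss 0 + (1+E) * (Real.sqrt (2*Real.pi)/2))
            / Real.sqrt (2*Real.pi))) :=
        (((hNc.comp h1).add ((hNc.comp h2).const_mul E)).add_const _).div_const _
      have hval : (Ngauss 0 + E * Ngauss 0 + (1+E) * (Real.sqrt (2*Real.pi)/2))
          / Real.sqrt (2*Real.pi) = 1 := by
        rw [Ngauss_zero, hE1]
        rw [show (0:ℝ) + 1 * 0 + (1+1) * (Real.sqrt (2*Real.pi)/2) = Real.sqrt (2*Real.pi)
          by ring]
        exact div_self hsqpos.ne'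
      rw [hval] at hlim
      refine hlim.congr' ?_
      filter_upwards [eventually_gt_atTop (0:ℝ)] with t ht
      simp [hG, not_le.2 ht]
    · -- c > 0
      have h1 : Tendsto (fun t : ℝ => (c*t - a)/Real.sqrt t) atTop atTop := by
        have h := (hsqrtTop.const_mul_atTop hcpos).atTop_add (hinv.const_mul (-a))
        refine h.congr' ?_
        filter_upwards [eventually_gt_atTop (0:ℝ)] with t ht
        have hst : 0 < Real.sqrt t := Real.sqrt_pos.2 ht
        have hts : Real.sqrt t ^ 2 = t := Real.sq_sqrt ht.le
        rw [eq_div_iff hst.ne']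
        field_simp
        nlinarith [hts]
      have h2 : Tendsto (fun t : ℝ => -((a + c*t)/Real.sqrt t)) atTop atBot := by
        have h2' : Tendsto (fun t : ℝ => (a + c*t)/Real.sqrt t) atTop atTop := by
          have h := (hsqrtTop.const_mul_atTop hcpos).atTop_add (hinv.const_mul a)
          refine h.congr' ?_
          filter_upwards [eventually_gt_atTop (0:ℝ)] with t ht
          have hst : 0 < Real.sqrt t := Real.sqrt_pos.2 ht
          have hts : Real.sqrt t ^ 2 = t := Real.sq_sqrt ht.le
          rw [eq_div_iff hst.ne']
          field_simp
          nlinarith [hts]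
        exact tendsto_neg_atTop_atBot.comp h2'
      have hlim : Tendsto (fun t : ℝ =>
          (Ngauss ((c*t - a)/Real.sqrt t) + E * Ngauss (-((a + c*t)/Real.sqrt t))
            + (1+E) * (Real.sqrt (2*Real.pi)/2)) / Real.sqrt (2*Real.pi)) atTop
          (𝓝 ((Real.sqrt (2*Real.pi)/2 + E * (-(Real.sqrt (2*Real.pi)/2))
            + (1+E) * (Real.sqrt (2*Real.pi)/2)) / Real.sqrt (2*Real.pi))) :=
        (((Ngauss_top.comp h1).add ((Ngauss_bot.comp h2).const_mul E)).add_const _).div_const _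
      have hval : (Real.sqrt (2*Real.pi)/2 + E * (-(Real.sqrt (2*Real.pi)/2))
          + (1+E) * (Real.sqrt (2*Real.pi)/2)) / Real.sqrt (2*Real.pi) = 1 := by
        rw [show Real.sqrt (2*Real.pi)/2 + E * (-(Real.sqrt (2*Real.pi)/2))
          + (1+E) * (Real.sqrt (2*Real.pi)/2) = Real.sqrt (2*Real.pi) by ring]
        exact div_self hsqpos.ne'
      rw [hval] at hlim
      refine hlim.congr' ?_
      filter_upwards [eventually_gt_atTop (0:ℝ)] with t ht
      simp [hG, not_le.2 ht]
  have hint := integral_Ioi_of_hasDerivAt_of_nonneg hcont hderiv hpos htop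
  rw [hint, hG0, sub_zero]

/-- Total mass of the inverse Gaussian (drifted first-hitting) density:
`∫₀^∞ a/√(2πt³) e^{−(a−μt)²/(2t)} dt = e^{(μ−|μ|)a}`; in particular it equals `1`
when `μ ≥ 0` and `e^{2μa}` when `μ < 0`. -/
theorem inverse_gaussian_total_mass (a μ : ℝ) (ha : 0 < a) :
    (∫ t in Set.Ioi (0:ℝ),
        a / Real.sqrt (2 * Real.pi * t ^ 3) * Real.exp (-(a - μ * t) ^ 2 / (2 * t))) =
      Real.exp ((μ - |μ|) * a) ∧
    (0 ≤ μ →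
      (∫ t in Set.Ioi (0:ℝ),
          a / Real.sqrt (2 * Real.pi * t ^ 3) * Real.exp (-(a - μ * t) ^ 2 / (2 * t))) = 1) ∧
    (μ < 0 →
      (∫ t in Set.Ioi (0:ℝ),
          a / Real.sqrt (2 * Real.pi * t ^ 3) * Real.exp (-(a - μ * t) ^ 2 / (2 * t))) =
        Real.exp (2 * μ * a)) := by
  have hkey := inverse_gaussian_key a |μ| ha (abs_nonneg μ)
  have hmain : (∫ t in Set.Ioi (0:ℝ),
      a / Real.sqrt (2 * Real.pi * t ^ 3) * Real.exp (-(a - μ * t) ^ 2 / (2 * t)))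
      = Real.exp ((μ - |μ|) * a) := by
    have hcongr : ∀ t ∈ Set.Ioi (0:ℝ),
        a / Real.sqrt (2 * Real.pi * t ^ 3) * Real.exp (-(a - μ * t) ^ 2 / (2 * t))
        = Real.exp ((μ - |μ|) * a) *
          (a / Real.sqrt (2 * Real.pi * t ^ 3) * Real.exp (-(a - |μ| * t) ^ 2 / (2 * t))) := by
      intro t ht
      have ht0 : (0:ℝ) < t := ht
      rw [show Real.exp ((μ - |μ|) * a) *
          (a / Real.sqrt (2 * Real.pi * t ^ 3) * Real.exp (-(a - |μ| * t) ^ 2 / (2 * t)))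
        = a / Real.sqrt (2 * Real.pi * t ^ 3) *
          (Real.exp ((μ - |μ|) * a) * Real.exp (-(a - |μ| * t) ^ 2 / (2 * t))) by ring,
        ← Real.exp_add]
      congr 2
      have hμ : |μ| ^ 2 = μ ^ 2 := sq_abs μ
      field_simp
      linear_combination t ^ 2 * hμ
    rw [MeasureTheory.setIntegral_congr_fun measurableSet_Ioi hcongr,
      MeasureTheory.integral_const_mul, hkey, mul_one]
  refine ⟨hmain, fun hμ => ?_, fun hμ => ?_⟩
  · rw [hmain, abs_of_nonneg hμ]
    simp
  · rw [hmain, abs_of_neg hμ]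
    ring_nf
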